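/- With the data and maps D₄, D₃ as in the context: D₃ ∘ D₄ = 0, D₄ is injective, and the kernel of D₃ is a ℚ-vector space of dimension a + b (equivalently, the rank of D₃ equals 3 + a). -/

import Mathlib

/-!
A vector `w` lies in `ker ∂₃` iff `q_i - p_i = m_i l_i x = n_i l_i y = n_i m_i z` for every `i`
and `m'_j x = n'_j y = 0` for every `j`. Then the functional `v ↦ y v₁ - x v₂` vanishes on every
generator `(n_i, m_i, l_i)` and `(n'_j, m'_j, 0)`, hence on all of `ℚ³`, so `x = y = 0`; now
`n_i m_i z = 0`, so `v ↦ z v₃` vanishes on the generators too and `z = 0`. Hence `ker ∂₃` consists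
of the vectors with `x = y = z = 0` and `p = q`, a copy of `ℚ^a × ℚ^b`. Injectivity of `∂₄` is the
same spanning argument, since its rows are the generators.
-/

/-- Index set for the basis of `W = ℚ^(3+2a+b)`: the three basis vectors `x, y, z`,
then `p_1, …, p_a`, then `q_1, …, q_a`, then `r_1, …, r_b`. -/
abbrev WIdx (a b : ℕ) : Type := (Fin 3 ⊕ Fin a) ⊕ (Fin a ⊕ Fin b)

/-- Index set for the basis of `U = ℚ^(1+3a+2b)`: the basis vector `w`, then the
`s_{i,k}` (`i ∈ Fin a`, `k ∈ Fin 3`), then the `t_{j,k}` (`j ∈ Fin b`, `k ∈ Fin 2`). -/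
abbrev UIdx (a b : ℕ) : Type := Unit ⊕ ((Fin a × Fin 3) ⊕ (Fin b × Fin 2))

/-- The matrix of the cellular boundary operator `∂₄ : ℚ³ → W` of the CW structure on
the link of a point of the 0-dimensional stratum of a complex 3-dimensional toric
variety: the `x`-, `y`-, `z`-rows vanish, the `p_i`- and `q_i`-rows are
`(n_i, m_i, l_i)`, and the `r_j`-rows are `(n'_j, m'_j, 0)`. -/
def M4 (a b : ℕ) (n m l : Fin a → ℤ) (n' m' : Fin b → ℤ) :
    Matrix (WIdx a b) (Fin 3) ℚ := fun i =>
  match i with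
  | .inl (.inl _) => 0
  | .inl (.inr i) => ![((n i : ℤ) : ℚ), ((m i : ℤ) : ℚ), ((l i : ℤ) : ℚ)]
  | .inr (.inl i) => ![((n i : ℤ) : ℚ), ((m i : ℤ) : ℚ), ((l i : ℤ) : ℚ)]
  | .inr (.inr j) => ![((n' j : ℤ) : ℚ), ((m' j : ℤ) : ℚ), 0]

/-- The matrix of the cellular boundary operator `∂₃ : W → U`: the `w`-row vanishes;
the `s_{i,1}`-row has `m_i·l_i` at `x`, `1` at `p_i`, `-1` at `q_i`;
the `s_{i,2}`-row has `n_i·l_i` at `y`, `1` at `p_i`, `-1` at `q_i`;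
the `s_{i,3}`-row has `n_i·m_i` at `z`, `1` at `p_i`, `-1` at `q_i`;
the `t_{j,1}`-row has `-m'_j` at `x`; the `t_{j,2}`-row has `n'_j` at `y`. -/
def M3 (a b : ℕ) (n m l : Fin a → ℤ) (n' m' : Fin b → ℤ) :
    Matrix (UIdx a b) (WIdx a b) ℚ := fun i j =>
  match i, j with
  | .inl _, _ => 0
  | .inr (.inl (i, k)), .inl (.inl c) =>
      if c = k then ![((m i * l i : ℤ) : ℚ), ((n i * l i : ℤ) : ℚ), ((n i * m i : ℤ) : ℚ)] k
      else 0
  | .inr (.inl (i, _)), .inl (.inr i') => if i' = i then 1 else 0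
  | .inr (.inl (i, _)), .inr (.inl i') => if i' = i then -1 else 0
  | .inr (.inl _), .inr (.inr _) => 0
  | .inr (.inr (j, k)), .inl (.inl c) =>
      if k = 0 ∧ c = 0 then -((m' j : ℤ) : ℚ)
      else if k = 1 ∧ c = 1 then ((n' j : ℤ) : ℚ) else 0
  | .inr (.inr _), _ => 0

open Matrix

theorem Matrix.eq_zero_of_dotProduct_eq_zero_of_span_eq_top {R ι : Type*} [CommSemiring R]
    [Fintype ι] [DecidableEq ι] {s : Set (ι → R)} (hs : Submodule.span R s = ⊤) {x : ι → R}
    (h : ∀ v ∈ s, x ⬝ᵥ v = 0) : x = 0 :=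
  (dotProductEquiv R ι).injective <| by
    rw [map_zero]
    exact LinearMap.ext_on hs fun v hv => by simpa using h v hv

def rayGenerators {a b : ℕ} (n m l : Fin a → ℤ) (n' m' : Fin b → ℤ) : Set (Fin 3 → ℚ) :=
  (Set.range fun i => ![((n i : ℤ) : ℚ), ((m i : ℤ) : ℚ), ((l i : ℤ) : ℚ)]) ∪
    (Set.range fun j => ![((n' j : ℤ) : ℚ), ((m' j : ℤ) : ℚ), 0])

def pqDiagonal (a b : ℕ) : ((Fin a → ℚ) × (Fin b → ℚ)) →ₗ[ℚ] (WIdx a b → ℚ) where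
  toFun v
    | .inl (.inl _) => 0
    | .inl (.inr i) => v.1 i
    | .inr (.inl i) => v.1 i
    | .inr (.inr j) => v.2 j
  map_add' u v := funext fun idx => by rcases idx with (_ | _) | (_ | _) <;> simp
  map_smul' c v := funext fun idx => by rcases idx with (_ | _) | (_ | _) <;> simp

lemma pqDiagonal_injective (a b : ℕ) : Function.Injective (pqDiagonal a b) :=
  fun _ _ h => Prod.ext (funext fun i => congrFun h (.inl (.inr i)))
    (funext fun j => congrFun h (.inr (.inr j)))

section
variable {a b : ℕ} {n m l : Fin a → ℤ} {n' m' : Fin b → ℤ}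

lemma M4_mulVec_xyz (v : Fin 3 → ℚ) (c : Fin 3) :
    (M4 a b n m l n' m' *ᵥ v) (.inl (.inl c)) = 0 := by
  simp [M4, mulVec]

lemma M4_mulVec_p (v : Fin 3 → ℚ) (i : Fin a) :
    (M4 a b n m l n' m' *ᵥ v) (.inl (.inr i)) = ![(n i : ℚ), m i, l i] ⬝ᵥ v := rfl

lemma M4_mulVec_q (v : Fin 3 → ℚ) (i : Fin a) :
    (M4 a b n m l n' m' *ᵥ v) (.inr (.inl i)) = ![(n i : ℚ), m i, l i] ⬝ᵥ v := rfl

lemma M3_mulVec_w (w : WIdx a b → ℚ) (u : Unit) :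
    (M3 a b n m l n' m' *ᵥ w) (.inl u) = 0 := by
  simp [M3, mulVec, dotProduct]

lemma M3_mulVec_s (w : WIdx a b → ℚ) (i : Fin a) (k : Fin 3) :
    (M3 a b n m l n' m' *ᵥ w) (.inr (.inl (i, k))) =
      ![(m i * l i : ℚ), n i * l i, n i * m i] k * w (.inl (.inl k)) +
        w (.inl (.inr i)) - w (.inr (.inl i)) := by
  simp [mulVec, dotProduct, M3, Fintype.sum_sum_type, ite_mul, Finset.sum_ite_eq']
  ring

lemma M3_mulVec_t₁ (w : WIdx a b → ℚ) (j : Fin b) :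
    (M3 a b n m l n' m' *ᵥ w) (.inr (.inr (j, 0))) = -(m' j * w (.inl (.inl 0))) := by
  simp [M3, mulVec, dotProduct, Fintype.sum_sum_type]

lemma M3_mulVec_t₂ (w : WIdx a b → ℚ) (j : Fin b) :
    (M3 a b n m l n' m' *ᵥ w) (.inr (.inr (j, 1))) = n' j * w (.inl (.inl 1)) := by
  simp [M3, mulVec, dotProduct, Fintype.sum_sum_type]

lemma M3_mulVec_eq_zero_iff (w : WIdx a b → ℚ) :
    M3 a b n m l n' m' *ᵥ w = 0 ↔
      (∀ i, (m i * l i : ℚ) * w (.inl (.inl 0)) = w (.inr (.inl i)) - w (.inl (.inr i)) ∧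
        (n i * l i : ℚ) * w (.inl (.inl 1)) = w (.inr (.inl i)) - w (.inl (.inr i)) ∧
        (n i * m i : ℚ) * w (.inl (.inl 2)) = w (.inr (.inl i)) - w (.inl (.inr i))) ∧
      ∀ j, (m' j : ℚ) * w (.inl (.inl 0)) = 0 ∧ (n' j : ℚ) * w (.inl (.inl 1)) = 0 := by
  simp only [funext_iff, Sum.forall, Prod.forall, Fin.forall_fin_succ, IsEmpty.forall_iff,
    Fin.succ_zero_eq_one, Fin.succ_one_eq_two, cons_val_zero, cons_val_one, cons_val_two,
    head_cons, tail_cons, Pi.zero_apply, and_true, neg_eq_zero, add_sub_assoc,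
    add_eq_zero_iff_eq_neg, neg_sub, implies_true, true_and,
    M3_mulVec_w, M3_mulVec_s, M3_mulVec_t₁, M3_mulVec_t₂]

lemma M3_mulVec_M4_mulVec (v : Fin 3 → ℚ) :
    M3 a b n m l n' m' *ᵥ (M4 a b n m l n' m' *ᵥ v) = 0 := by
  rw [M3_mulVec_eq_zero_iff]
  simp [M4_mulVec_xyz, M4_mulVec_p, M4_mulVec_q]

lemma M4_mulVec_injective (hspan : Submodule.span ℚ (rayGenerators n m l n' m') = ⊤) :
    Function.Injective (M4 a b n m l n' m' *ᵥ ·) := by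
  refine (injective_iff_map_eq_zero (mulVecLin (M4 a b n m l n' m'))).mpr fun v hv => ?_
  refine eq_zero_of_dotProduct_eq_zero_of_span_eq_top hspan ?_
  rintro _ (⟨i, rfl⟩ | ⟨j, rfl⟩) <;> rw [dotProduct_comm]
  · exact congrFun hv (.inl (.inr i))
  · exact congrFun hv (.inr (.inr j))

lemma xyz_eq_zero_of_span_eq_top (hn : ∀ i, n i ≠ 0) (hm : ∀ i, m i ≠ 0) (hl : ∀ i, l i ≠ 0)
    (hspan : Submodule.span ℚ (rayGenerators n m l n' m') = ⊤)
    {X Y Z : ℚ} (hXY : ∀ i, (m i * l i : ℚ) * X = n i * l i * Y)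
    (hYZ : ∀ i, (n i * l i : ℚ) * Y = n i * m i * Z)
    (hX : ∀ j, (m' j : ℚ) * X = 0) (hY : ∀ j, (n' j : ℚ) * Y = 0) :
    X = 0 ∧ Y = 0 ∧ Z = 0 := by
  have hYX : ![Y, -X, 0] = 0 := by
    refine eq_zero_of_dotProduct_eq_zero_of_span_eq_top hspan ?_
    rintro _ (⟨i, rfl⟩ | ⟨j, rfl⟩) <;> simp only [dotProduct, Fin.sum_univ_three,
      cons_val_zero, cons_val_one, cons_val_two, head_cons, tail_cons, zero_mul, add_zero]
    · refine mul_left_cancel₀ (Int.cast_ne_zero.mpr (hl i)) ?_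
      linear_combination -hXY i
    · linear_combination hY j - hX j
  obtain ⟨rfl, rfl⟩ : Y = 0 ∧ X = 0 := by simpa using hYX
  have hZ : ![0, 0, Z] = 0 := by
    refine eq_zero_of_dotProduct_eq_zero_of_span_eq_top hspan ?_
    rintro _ (⟨i, rfl⟩ | ⟨j, rfl⟩) <;> simp only [dotProduct, Fin.sum_univ_three,
      cons_val_zero, cons_val_one, cons_val_two, head_cons, tail_cons, zero_mul, mul_zero,
      zero_add]
    have hnm : (n i * m i : ℚ) ≠ 0 := by simp [hn i, hm i]
    simp [show Z = 0 by simpa [hnm] using (hYZ i).symm]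
  simpa using hZ

lemma ker_toLin'_M3 (hn : ∀ i, n i ≠ 0) (hm : ∀ i, m i ≠ 0) (hl : ∀ i, l i ≠ 0)
    (hspan : Submodule.span ℚ (rayGenerators n m l n' m') = ⊤) :
    LinearMap.ker (toLin' (M3 a b n m l n' m')) = LinearMap.range (pqDiagonal a b) := by
  ext w
  rw [LinearMap.mem_ker, toLin'_apply, M3_mulVec_eq_zero_iff]
  constructor
  · rintro ⟨hs, ht⟩
    obtain ⟨hx, hy, hz⟩ := xyz_eq_zero_of_span_eq_top hn hm hl hspan
      (fun i => (hs i).1.trans (hs i).2.1.symm) (fun i => (hs i).2.1.trans (hs i).2.2.symm)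
      (fun j => (ht j).1) (fun j => (ht j).2)
    refine ⟨(fun i => w (.inl (.inr i)), fun j => w (.inr (.inr j))), funext ?_⟩
    rintro ((c | i) | (i | j))
    · fin_cases c <;> simp [pqDiagonal, hx, hy, hz]
    · rfl
    · have hpq := (hs i).1
      rw [hx, mul_zero, eq_comm, sub_eq_zero] at hpq
      exact hpq.symm
    · rfl
  · rintro ⟨v, rfl⟩
    simp [pqDiagonal]

end

theorem stmt6_general (a b : ℕ) (n m l : Fin a → ℤ) (n' m' : Fin b → ℤ)
    (hn : ∀ i, n i ≠ 0) (hm : ∀ i, m i ≠ 0) (hl : ∀ i, l i ≠ 0)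
    (hspan : Submodule.span ℚ
        ((Set.range fun i => ![((n i : ℤ) : ℚ), ((m i : ℤ) : ℚ), ((l i : ℤ) : ℚ)]) ∪
          (Set.range fun j => ![((n' j : ℤ) : ℚ), ((m' j : ℤ) : ℚ), 0])) = ⊤) :
    Matrix.toLin' (M3 a b n m l n' m') ∘ₗ Matrix.toLin' (M4 a b n m l n' m') = 0 ∧
    Function.Injective (Matrix.toLin' (M4 a b n m l n' m')) ∧
    Module.finrank ℚ (LinearMap.ker (Matrix.toLin' (M3 a b n m l n' m'))) = a + b := by
  refine ⟨LinearMap.ext fun v => M3_mulVec_M4_mulVec v, M4_mulVec_injective hspan, ?_⟩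
  rw [ker_toLin'_M3 hn hm hl hspan, LinearMap.finrank_range_of_inj (pqDiagonal_injective a b)]
  simp

/-- The cellular boundary operators `∂₄` and `∂₃` of the link of a point of the
0-dimensional stratum of a complex 3-dimensional toric variety satisfy
`∂₃ ∘ ∂₄ = 0`, `∂₄` is injective, and `ker ∂₃` has dimension `a + b`. -/
theorem stmt6 (a b : ℕ) (n m l : Fin a → ℤ) (n' m' : Fin b → ℤ)
    (hn : ∀ i, n i ≠ 0) (hm : ∀ i, m i ≠ 0) (hl : ∀ i, l i ≠ 0)
    (hnm' : ∀ j, ¬(n' j = 0 ∧ m' j = 0))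
    (hspan : Submodule.span ℚ
        ((Set.range fun i => ![((n i : ℤ) : ℚ), ((m i : ℤ) : ℚ), ((l i : ℤ) : ℚ)]) ∪
          (Set.range fun j => ![((n' j : ℤ) : ℚ), ((m' j : ℤ) : ℚ), 0])) = ⊤) :
    Matrix.toLin' (M3 a b n m l n' m') ∘ₗ Matrix.toLin' (M4 a b n m l n' m') = 0 ∧
    Function.Injective (Matrix.toLin' (M4 a b n m l n' m')) ∧
    Module.finrank ℚ (LinearMap.ker (Matrix.toLin' (M3 a b n m l n' m'))) = a + b :=
  stmt6_general a b n m l n' m' hn hm hl hspan
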